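/- Let I be a nonempty bounded interval in ℝ with midpoint m and half-length h, and let I' be a bounded interval in ℝ. If m ∉ I', then the interleaving distance satisfies d(χ_I, χ_{I'}) ≥ h; that is, χ_I and χ_{I'} are not ε-interleaved for any ε < h. -/

import Mathlib

open CategoryTheory

universe u v

/-- The translation functor `a ↦ a + ε` on the poset category `(ℝ, ≤)`. -/
noncomputable def Tr (ε : ℝ) : ℝ ⥤ ℝ :=
  Monotone.functor (f := fun a => a + ε) (fun _ _ h => by simpa using h)

/-- An `ε`-interleaving of `(ℝ,≤)`-indexed diagrams `F` and `G` in a category `D`: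
natural transformations `φ : F ⇒ G ∘ T_ε` and `ψ : G ⇒ F ∘ T_ε` (given componentwise,
together with their naturality squares) such that the two triangle identities
`ψ(a+ε) ∘ φ(a) = F(a ≤ a+2ε)` and `φ(a+ε) ∘ ψ(a) = G(a ≤ a+2ε)` hold. Requires `0 ≤ ε`. -/
structure Interleaving {D : Type u} [Category.{v} D] (ε : ℝ) (F G : ℝ ⥤ D) where
  hε : 0 ≤ ε
  φ : ∀ a : ℝ, F.obj a ⟶ G.obj (a + ε)
  ψ : ∀ a : ℝ, G.obj a ⟶ F.obj (a + ε)
  natφ : ∀ (a b : ℝ) (h : a ≤ b),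
    F.map (homOfLE h) ≫ φ b = φ a ≫ G.map (homOfLE (by linarith : a + ε ≤ b + ε))
  natψ : ∀ (a b : ℝ) (h : a ≤ b),
    G.map (homOfLE h) ≫ ψ b = ψ a ≫ F.map (homOfLE (by linarith : a + ε ≤ b + ε))
  triφ : ∀ a : ℝ,
    φ a ≫ ψ (a + ε) = F.map (homOfLE (by linarith : a ≤ a + ε + ε))
  triψ : ∀ a : ℝ,
    ψ a ≫ φ (a + ε) = G.map (homOfLE (by linarith : a ≤ a + ε + ε))

/-- `F` and `G` are `ε`-interleaved if an `ε`-interleaving exists. -/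
def Interleaved {D : Type u} [Category.{v} D] (ε : ℝ) (F G : ℝ ⥤ D) : Prop :=
  Nonempty (Interleaving ε F G)

/-- The interleaving distance between two `(ℝ,≤)`-indexed diagrams, an extended
nonnegative real number; it is `∞` if `F` and `G` are not `ε`-interleaved for any `ε ≥ 0`. -/
noncomputable def interleavingDist {D : Type u} [Category.{v} D] (F G : ℝ ⥤ D) : ENNReal :=
  sInf (ENNReal.ofReal '' {ε : ℝ | Interleaved ε F G})

open CategoryTheory Limits

noncomputable section

variable (𝕜 : Type) [Field 𝕜]

open Classical in
/-- The value of the interval module `χ_I` at `a : ℝ`: the field `𝕜` (as the full submodule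
of itself) if `a ∈ I`, and `0` (the trivial submodule) otherwise. -/
def chiObj (I : Set ℝ) (a : ℝ) : Submodule 𝕜 𝕜 :=
  if a ∈ I then ⊤ else ⊥

open Classical in
/-- The structure map of the interval module `χ_I`: the identity of `𝕜` if `a, b ∈ I`,
and `0` otherwise. -/
def chiMap (I : Set ℝ) {a b : ℝ} (_ : a ≤ b) :
    chiObj 𝕜 I a →ₗ[𝕜] chiObj 𝕜 I b :=
  if h : chiObj 𝕜 I a ≤ chiObj 𝕜 I b then Submodule.inclusion h else 0

open Classical in
lemma chiMap_val (I : Set ℝ) {a b : ℝ} (hab : a ≤ b) (x : chiObj 𝕜 I a) :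
    (chiMap 𝕜 I hab x : 𝕜) = if b ∈ I then (x : 𝕜) else 0 := by
  by_cases hb : b ∈ I
  · have h : chiObj 𝕜 I a ≤ chiObj 𝕜 I b := by
      intro y _
      rw [chiObj, if_pos hb]
      exact Submodule.mem_top
    rw [chiMap, dif_pos h, if_pos hb]
    rfl
  · rw [if_neg hb]
    by_cases ha : a ∈ I
    · have h : ¬ chiObj 𝕜 I a ≤ chiObj 𝕜 I b := by
        simp only [chiObj, if_pos ha, if_neg hb]
        intro h
        have := h (Submodule.mem_top (x := (1 : 𝕜)))
        exact one_ne_zero ((Submodule.mem_bot 𝕜).mp this)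
      rw [chiMap, dif_neg h]
      rfl
    · have hx : (x : 𝕜) = 0 := by
        have := x.2
        simp only [chiObj, if_neg ha] at this
        exact (Submodule.mem_bot 𝕜).mp this
      by_cases h : chiObj 𝕜 I a ≤ chiObj 𝕜 I b
      · rw [chiMap, dif_pos h]
        simpa [Submodule.inclusion] using hx
      · rw [chiMap, dif_neg h]
        rfl

lemma chiMap_id (I : Set ℝ) (a : ℝ) :
    chiMap 𝕜 I (le_refl a) = LinearMap.id := by
  apply LinearMap.ext
  intro x
  apply Subtype.ext
  rw [chiMap_val]
  classical
  by_cases ha : a ∈ I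
  · rw [if_pos ha]
    rfl
  · rw [if_neg ha]
    have := x.2
    simp only [chiObj, if_neg ha] at this
    have hx := (Submodule.mem_bot 𝕜).mp this
    simp [hx]

lemma chiMap_comp (I : Set ℝ) (hI : I.OrdConnected) {a b c : ℝ} (hab : a ≤ b) (hbc : b ≤ c) :
    chiMap 𝕜 I hbc ∘ₗ chiMap 𝕜 I hab = chiMap 𝕜 I (hab.trans hbc) := by
  apply LinearMap.ext
  intro x
  apply Subtype.ext
  show (chiMap 𝕜 I hbc (chiMap 𝕜 I hab x) : 𝕜) = (chiMap 𝕜 I (hab.trans hbc) x : 𝕜)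
  rw [chiMap_val, chiMap_val, chiMap_val]
  classical
  by_cases hc : c ∈ I
  · rw [if_pos hc, if_pos hc]
    by_cases hb : b ∈ I
    · rw [if_pos hb]
    · rw [if_neg hb]
      by_cases ha : a ∈ I
      · exact absurd (hI.out ha hc ⟨hab, hbc⟩) hb
      · have := x.2
        simp only [chiObj, if_neg ha, Submodule.mem_bot] at this
        simp [this]
  · rw [if_neg hc, if_neg hc]

/-- The interval module (diagram) `χ_I : (ℝ,≤) ⥤ Vec` associated to an interval `I ⊆ ℝ`
(`Vec` is the category of finite-dimensional `𝕜`-vector spaces): it is `𝕜` on `I` with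
identity structure maps, and `0` elsewhere. -/
def chi (I : Set ℝ) (hI : I.OrdConnected) : ℝ ⥤ FGModuleCat 𝕜 where
  obj a := FGModuleCat.of 𝕜 (chiObj 𝕜 I a)
  map {a b} h := FGModuleCat.ofHom (chiMap 𝕜 I (leOfHom h))
  map_id a := FGModuleCat.hom_ext (chiMap_id 𝕜 I a)
  map_comp {a b c} h h' := FGModuleCat.hom_ext (chiMap_comp 𝕜 I hI (leOfHom h) (leOfHom h')).symm

end

/-- If `I` is a nonempty bounded interval with midpoint `m` and half-length `h`, and
`m ∉ I'`, then `d(χ_I, χ_{I'}) ≥ h`; indeed `χ_I` and `χ_{I'}` are not `ε`-interleaved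
for any `ε < h`. -/
theorem chi_dist_ge (𝕜 : Type) [Field 𝕜] (I I' : Set ℝ)
    (hI : I.OrdConnected) (hI' : I'.OrdConnected)
    (hbd : Bornology.IsBounded I) (hbd' : Bornology.IsBounded I')
    (hne : I.Nonempty) (hm : (sInf I + sSup I) / 2 ∉ I') :
    ENNReal.ofReal ((sSup I - sInf I) / 2) ≤
      interleavingDist (chi 𝕜 I hI) (chi 𝕜 I' hI') ∧
    ∀ ε : ℝ, ε < (sSup I - sInf I) / 2 →
      ¬ Interleaved ε (chi 𝕜 I hI) (chi 𝕜 I' hI') := by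
  have key : ∀ ε : ℝ, ε < (sSup I - sInf I) / 2 →
      ¬ Interleaved ε (chi 𝕜 I hI) (chi 𝕜 I' hI') := by
    rintro ε hε ⟨⟨hε0, φ, ψ, natφ, natψ, triφ, triψ⟩⟩
    set m : ℝ := (sInf I + sSup I) / 2 with hmdef
    have hbb : BddBelow I := hbd.bddBelow
    have hba : BddAbove I := hbd.bddAbove
    have h1 : sInf I < m - ε := by simp only [hmdef]; linarith
    have h2 : m + ε < sSup I := by simp only [hmdef]; linarith
    obtain ⟨y, hyI, hy⟩ := (csInf_lt_iff hbb hne).mp h1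
    obtain ⟨z, hzI, hz⟩ := (lt_csSup_iff hba hne).mp h2
    have hmem1 : m - ε ∈ I := hI.out hyI hzI ⟨hy.le, by linarith⟩
    have hmem2 : m - ε + ε + ε ∈ I := hI.out hyI hzI ⟨by linarith, by linarith⟩
    have hmI' : m - ε + ε ∉ I' := by
      have : m - ε + ε = m := by ring
      rw [this]; exact hm
    set a : ℝ := m - ε with hadef
    have hx1 : (1 : 𝕜) ∈ chiObj 𝕜 I a := by simp [chiObj, if_pos hmem1]
    set x : chiObj 𝕜 I a := ⟨1, hx1⟩ with hxdef
    have htri := triφ a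
    have heval : ((φ a ≫ ψ (a + ε)) x).1
        = (((chi 𝕜 I hI).map (homOfLE (by linarith : a ≤ a + ε + ε))) x).1 := by
      rw [htri]
    have hφ0 : φ a x = 0 := by
      apply Subtype.ext
      have h2' := (φ a x).2
      change (φ a x).1 ∈ chiObj 𝕜 I' (a + ε) at h2'
      have hbot : chiObj 𝕜 I' (a + ε) = ⊥ := by simp [chiObj, hmI']
      exact (Submodule.mem_bot 𝕜).mp (hbot.le h2')
    have hlhs : ((φ a ≫ ψ (a + ε)) x).1 = 0 := by
      show ((ψ (a + ε)) (φ a x)).1 = 0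
      rw [hφ0, map_zero]
      rfl
    have hrhs : (((chi 𝕜 I hI).map (homOfLE (by linarith : a ≤ a + ε + ε))) x).1 = 1 := by
      show ((chiMap 𝕜 I (by linarith : a ≤ a + ε + ε)) x).1 = 1
      rw [chiMap_val, if_pos hmem2]
    rw [hlhs, hrhs] at heval
    exact one_ne_zero heval.symm
  refine ⟨?_, key⟩
  apply le_sInf
  rintro b ⟨ε, hεI, rfl⟩
  apply ENNReal.ofReal_le_ofReal
  by_contra hlt
  exact key ε (lt_of_not_ge hlt) hεI
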